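/- arXiv:0807.1847 — 4 statements merged into one kernel-verified Lean document; each statement's English description precedes it below -/
import Mathlib

section
/- The Temperley–Lieb generator commutes with the quantum group coproduct action in the spin-1/2 tensor representation: [U⁺, Δ(x)] = 0 for x ∈ {X⁺, X⁻, K}, where Δ(X⁺) = X⁺⊗1 + K⊗X⁺, Δ(X⁻) = X⁻⊗K^{-1} + 1⊗X⁻, Δ(K) = K⊗K in the 2-dimensional representation X⁺ = e^{12}, X⁻ = e^{21}, K = diag(q, q^{-1}). -/
open Complex Matrix Kronecker Topology Filter

noncomputable def bC (η u : ℂ) : ℂ := Complex.sinh u / Complex.sinh (u + η)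
noncomputable def cC (η u : ℂ) : ℂ := Complex.sinh η / Complex.sinh (u + η)

noncomputable def Rsym (η u : ℂ) : Matrix (Fin 2 × Fin 2) (Fin 2 × Fin 2) ℂ :=
  fun p q =>
    if p = q then (if p.1 = p.2 then 1 else bC η u)
    else if p.1 = q.2 ∧ p.2 = q.1 ∧ p.1 ≠ p.2 then cC η u else 0

noncomputable def Rplus (η u : ℂ) : Matrix (Fin 2 × Fin 2) (Fin 2 × Fin 2) ℂ :=
  fun p q =>
    if p = q then (if p.1 = p.2 then 1 else bC η u)
    else if p = ((0 : Fin 2), (1 : Fin 2)) ∧ q = (1, 0) then Complex.exp (-u) * cC η u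
    else if p = ((1 : Fin 2), (0 : Fin 2)) ∧ q = (0, 1) then Complex.exp u * cC η u
    else 0

noncomputable def Rminus (η u : ℂ) : Matrix (Fin 2 × Fin 2) (Fin 2 × Fin 2) ℂ :=
  fun p q =>
    if p = q then (if p.1 = p.2 then 1 else bC η u)
    else if p = ((0 : Fin 2), (1 : Fin 2)) ∧ q = (1, 0) then Complex.exp u * cC η u
    else if p = ((1 : Fin 2), (0 : Fin 2)) ∧ q = (0, 1) then Complex.exp (-u) * cC η u
    else 0

def flipMat : Matrix (Fin 2 × Fin 2) (Fin 2 × Fin 2) ℂ :=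
  fun p q => if p.1 = q.2 ∧ p.2 = q.1 then 1 else 0

noncomputable def Uplus (q : ℂ) : Matrix (Fin 2 × Fin 2) (Fin 2 × Fin 2) ℂ :=
  fun p r =>
    if p = ((0 : Fin 2), (1 : Fin 2)) ∧ r = (0, 1) then q⁻¹
    else if p = ((0 : Fin 2), (1 : Fin 2)) ∧ r = (1, 0) then -1
    else if p = ((1 : Fin 2), (0 : Fin 2)) ∧ r = (0, 1) then -1
    else if p = ((1 : Fin 2), (0 : Fin 2)) ∧ r = (1, 0) then q
    else 0

noncomputable def embed {n : ℕ} (a b : Fin n) (M : Matrix (Fin 2 × Fin 2) (Fin 2 × Fin 2) ℂ) :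
    Matrix (Fin n → Fin 2) (Fin n → Fin 2) ℂ :=
  fun f g => M (f a, f b) (g a, g b) *
    ∏ i ∈ Finset.univ.filter (fun i => i ≠ a ∧ i ≠ b), (if f i = g i then (1 : ℂ) else 0)

noncomputable def monodromy (η lam : ℂ) {n : ℕ} (ξ : Fin n → ℂ) :
    Matrix (Fin (n + 1) → Fin 2) (Fin (n + 1) → Fin 2) ℂ :=
  (((List.finRange n).reverse).map
    (fun j => embed (0 : Fin (n + 1)) j.succ (Rsym η (lam - ξ j)))).prod

/-- Spin-1/2 matrix `X⁺ = e^{12}`. -/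
def Xp : Matrix (Fin 2) (Fin 2) ℂ := fun i j => if i = 0 ∧ j = 1 then 1 else 0
/-- Spin-1/2 matrix `X⁻ = e^{21}`. -/
def Xm : Matrix (Fin 2) (Fin 2) ℂ := fun i j => if i = 1 ∧ j = 0 then 1 else 0
/-- Spin-1/2 matrix `K = diag(q, q⁻¹)`. -/
noncomputable def Kq (q : ℂ) : Matrix (Fin 2) (Fin 2) ℂ :=
  Matrix.diagonal (fun i => if i = 0 then q else q⁻¹)

/-! With `v = e₁ ⊗ e₂ - q e₂ ⊗ e₁` the `q`-singlet, `U⁺ = q⁻¹ v vᵀ`. The vector `v` spans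
the trivial subrepresentation of the coproduct action, and `vᵀ` that of its transpose:
`Δ(x) v = ε(x) v` and `vᵀ Δ(x) = ε(x) vᵀ` with counit `ε(X±) = 0`, `ε(K) = 1`. Hence
`U⁺ Δ(x) = q⁻¹ ε(x) v vᵀ = Δ(x) U⁺`. -/

theorem Matrix.commute_vecMulVec_of_mulVec_eq_smul {m R : Type*} [Fintype m] [CommSemiring R]
    {A : Matrix m m R} {v w : m → R} {c : R} (hv : A *ᵥ v = c • v) (hw : w ᵥ* A = c • w) :
    Commute (vecMulVec v w) A := by
  rw [Commute, SemiconjBy, vecMulVec_mul, mul_vecMulVec, hv, hw, smul_vecMulVec, vecMulVec_smul]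

def qSinglet (q : ℂ) : Fin 2 × Fin 2 → ℂ :=
  fun p => if p = (0, 1) then 1 else if p = (1, 0) then -q else 0

theorem Uplus_eq_smul_vecMulVec_qSinglet (q : ℂ) (hq : q ≠ 0) :
    Uplus q = q⁻¹ • vecMulVec (qSinglet q) (qSinglet q) := by
  ext ⟨i, j⟩ ⟨k, l⟩
  fin_cases i <;> fin_cases j <;> fin_cases k <;> fin_cases l <;>
    simp [Uplus, qSinglet, vecMulVec_apply, hq]

theorem commute_Uplus_of_qSinglet_eigen (q : ℂ) (hq : q ≠ 0)
    {A : Matrix (Fin 2 × Fin 2) (Fin 2 × Fin 2) ℂ} {c : ℂ}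
    (hv : A *ᵥ qSinglet q = c • qSinglet q) (hw : qSinglet q ᵥ* A = c • qSinglet q) :
    Commute (Uplus q) A := by
  rw [Uplus_eq_smul_vecMulVec_qSinglet q hq]
  exact (commute_vecMulVec_of_mulVec_eq_smul hv hw).smul_left _

theorem coprodXp_mulVec_qSinglet (q : ℂ) :
    (Xp ⊗ₖ (1 : Matrix (Fin 2) (Fin 2) ℂ) + Kq q ⊗ₖ Xp) *ᵥ qSinglet q = 0 := by
  ext ⟨i, j⟩
  fin_cases i <;> fin_cases j <;>
    simp [mulVec, dotProduct, Fintype.sum_prod_type, Xp, Kq, qSinglet, one_apply]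

theorem qSinglet_vecMul_coprodXp {q : ℂ} (hq : q ≠ 0) :
    qSinglet q ᵥ* (Xp ⊗ₖ (1 : Matrix (Fin 2) (Fin 2) ℂ) + Kq q ⊗ₖ Xp) = 0 := by
  ext ⟨i, j⟩
  fin_cases i <;> fin_cases j <;>
    simp [vecMul, dotProduct, Fintype.sum_prod_type, Xp, Kq, qSinglet, one_apply, hq]

theorem coprodXm_mulVec_qSinglet (q : ℂ) :
    (Xm ⊗ₖ Kq q⁻¹ + (1 : Matrix (Fin 2) (Fin 2) ℂ) ⊗ₖ Xm) *ᵥ qSinglet q = 0 := by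
  ext ⟨i, j⟩
  fin_cases i <;> fin_cases j <;>
    simp [mulVec, dotProduct, Fintype.sum_prod_type, Xm, Kq, qSinglet, one_apply]

theorem qSinglet_vecMul_coprodXm {q : ℂ} (hq : q ≠ 0) :
    qSinglet q ᵥ* (Xm ⊗ₖ Kq q⁻¹ + (1 : Matrix (Fin 2) (Fin 2) ℂ) ⊗ₖ Xm) = 0 := by
  ext ⟨i, j⟩
  fin_cases i <;> fin_cases j <;>
    simp [vecMul, dotProduct, Fintype.sum_prod_type, Xm, Kq, qSinglet, one_apply, hq]

theorem coprodK_mulVec_qSinglet {q : ℂ} (hq : q ≠ 0) :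
    (Kq q ⊗ₖ Kq q) *ᵥ qSinglet q = qSinglet q := by
  ext ⟨i, j⟩
  fin_cases i <;> fin_cases j <;>
    simp [mulVec, dotProduct, Fintype.sum_prod_type, Kq, qSinglet, hq]

theorem qSinglet_vecMul_coprodK {q : ℂ} (hq : q ≠ 0) :
    qSinglet q ᵥ* (Kq q ⊗ₖ Kq q) = qSinglet q := by
  ext ⟨i, j⟩
  fin_cases i <;> fin_cases j <;>
    simp [vecMul, dotProduct, Fintype.sum_prod_type, Kq, qSinglet, hq]

/-- The Temperley–Lieb generator `U⁺` commutes with the quantum group coproducts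
`Δ(X⁺) = X⁺⊗1 + K⊗X⁺`, `Δ(X⁻) = X⁻⊗K⁻¹ + 1⊗X⁻`, `Δ(K) = K⊗K` in the
spin-1/2 tensor representation. -/
theorem TL_commutes_with_coproduct (q : ℂ) (hq : q ≠ 0) :
    Uplus q * (Xp ⊗ₖ (1 : Matrix (Fin 2) (Fin 2) ℂ) + Kq q ⊗ₖ Xp)
      = (Xp ⊗ₖ (1 : Matrix (Fin 2) (Fin 2) ℂ) + Kq q ⊗ₖ Xp) * Uplus q ∧
    Uplus q * (Xm ⊗ₖ Kq q⁻¹ + (1 : Matrix (Fin 2) (Fin 2) ℂ) ⊗ₖ Xm)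
      = (Xm ⊗ₖ Kq q⁻¹ + (1 : Matrix (Fin 2) (Fin 2) ℂ) ⊗ₖ Xm) * Uplus q ∧
    Uplus q * (Kq q ⊗ₖ Kq q) = (Kq q ⊗ₖ Kq q) * Uplus q :=
  ⟨(commute_Uplus_of_qSinglet_eigen q hq (c := 0) (by simpa using coprodXp_mulVec_qSinglet q)
      (by simpa using qSinglet_vecMul_coprodXp hq)).eq,
    (commute_Uplus_of_qSinglet_eigen q hq (c := 0) (by simpa using coprodXm_mulVec_qSinglet q)
      (by simpa using qSinglet_vecMul_coprodXm hq)).eq,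
    (commute_Uplus_of_qSinglet_eigen q hq (c := 1) (by simpa using coprodK_mulVec_qSinglet hq)
      (by simpa using qSinglet_vecMul_coprodK hq)).eq⟩
end

section
/- The asymmetric R-matrix intertwines the U_q(sl₂) coproduct with the flipped coproduct in the spin-1/2 representation: R⁺(u) Δ(x) = (τ∘Δ)(x) R⁺(u) for x ∈ {X⁺, X⁻, K} and all u (with sinh(u+η) ≠ 0), where τ(a⊗b) = b⊗a. -/
open Complex Matrix Kronecker Topology Filter

/-! Conjugation by the flip turns `A ⊗ B` into `B ⊗ A`, so `(τ∘Δ)(X⁺) = 1 ⊗ X⁺ + X⁺ ⊗ K` etc., and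
each relation is checked entry by entry. For `K` it holds because `R⁺(u)` only mixes `|01⟩` and
`|10⟩`, on which `K ⊗ K` acts by the same scalar. For `X^±` the entries reduce to the two weight
identities `e^{-u} c + q b = 1` and `b + q e^{u} c = q`; after clearing `sinh (u + η)` these are
`e^{-u} sinh η + e^{η} sinh u = sinh (u + η)` and `e^{η}` times its image under `u ↔ η`,
both instances of the addition formula for `sinh`. -/

theorem flipMat_apply (p r : Fin 2 × Fin 2) : flipMat p r = if r = p.swap then 1 else 0 := by
  simp only [flipMat, Prod.ext_iff, Prod.fst_swap, Prod.snd_swap, eq_comm, and_comm]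

theorem flipMat_mul_apply (M : Matrix (Fin 2 × Fin 2) (Fin 2 × Fin 2) ℂ) (p r : Fin 2 × Fin 2) :
    (flipMat * M) p r = M p.swap r := by
  simp [mul_apply, flipMat_apply]

theorem mul_flipMat_apply (M : Matrix (Fin 2 × Fin 2) (Fin 2 × Fin 2) ℂ) (p r : Fin 2 × Fin 2) :
    (M * flipMat) p r = M p r.swap := by
  simp [mul_apply, flipMat_apply, eq_comm (a := r), Prod.swap_eq_iff_eq_swap]

theorem flipMat_mul_kronecker_mul_flipMat (A B : Matrix (Fin 2) (Fin 2) ℂ) :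
    flipMat * (A ⊗ₖ B) * flipMat = B ⊗ₖ A := by
  ext ⟨i, j⟩ ⟨k, l⟩
  simp [mul_flipMat_apply, flipMat_mul_apply, mul_comm]

theorem exp_neg_mul_sinh_add_exp_mul_sinh (x y : ℂ) :
    exp (-x) * sinh y + exp y * sinh x = sinh (x + y) := by
  rw [sinh_add, ← cosh_sub_sinh, ← cosh_add_sinh]; ring

section WeightIdentities

variable {η u : ℂ} (h : sinh (u + η) ≠ 0)
include h

theorem exp_neg_mul_cC_add_exp_mul_bC : exp (-u) * cC η u + exp η * bC η u = 1 := by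
  rw [cC, bC]
  field_simp
  linear_combination exp_neg_mul_sinh_add_exp_mul_sinh u η

theorem bC_add_exp_mul_exp_mul_cC : bC η u + exp η * (exp u * cC η u) = exp η := by
  have hexp : exp η * exp (-η) = 1 := by rw [← exp_add, add_neg_cancel, exp_zero]
  rw [cC, bC]
  field_simp
  linear_combination exp η * exp_neg_mul_sinh_add_exp_mul_sinh η u - sinh u * hexp
    - exp η * congrArg sinh (add_comm u η)

end WeightIdentities

theorem Rplus_intertwines_Xp {η u q : ℂ} (hq : q ≠ 0) (h₁ : exp (-u) * cC η u + q * bC η u = 1)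
    (h₂ : bC η u + q * (exp u * cC η u) = q) :
    Rplus η u * (Xp ⊗ₖ 1 + Kq q ⊗ₖ Xp) = (1 ⊗ₖ Xp + Xp ⊗ₖ Kq q) * Rplus η u := by
  have h₁' : bC η u + exp (-u) * cC η u * q⁻¹ = q⁻¹ := by field_simp; linear_combination h₁
  have h₂' : exp u * cC η u + bC η u * q⁻¹ = 1 := by field_simp; linear_combination h₂
  ext ⟨i, j⟩ ⟨k, l⟩
  fin_cases i <;> fin_cases j <;> fin_cases k <;> fin_cases l <;>
    simp [Matrix.mul_apply, Fintype.sum_prod_type, Fin.sum_univ_two, Rplus, Xp, Kq, Matrix.one_apply,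
      h₁, h₂, h₁', h₂']

theorem Rplus_intertwines_Xm {η u q : ℂ} (hq : q ≠ 0) (h₁ : exp (-u) * cC η u + q * bC η u = 1)
    (h₂ : bC η u + q * (exp u * cC η u) = q) :
    Rplus η u * (Xm ⊗ₖ Kq q⁻¹ + 1 ⊗ₖ Xm) = (Kq q⁻¹ ⊗ₖ Xm + Xm ⊗ₖ 1) * Rplus η u := by
  have h₁' : bC η u + exp (-u) * cC η u * q⁻¹ = q⁻¹ := by field_simp; linear_combination h₁
  have h₂' : exp u * cC η u + bC η u * q⁻¹ = 1 := by field_simp; linear_combination h₂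
  ext ⟨i, j⟩ ⟨k, l⟩
  fin_cases i <;> fin_cases j <;> fin_cases k <;> fin_cases l <;>
    simp [Matrix.mul_apply, Fintype.sum_prod_type, Fin.sum_univ_two, Rplus, Xm, Kq, Matrix.one_apply,
      h₁, h₂, h₁', h₂']

theorem Rplus_commute_Kq_kronecker (η u q : ℂ) : Commute (Rplus η u) (Kq q ⊗ₖ Kq q) := by
  ext ⟨i, j⟩ ⟨k, l⟩
  fin_cases i <;> fin_cases j <;> fin_cases k <;> fin_cases l <;>
    simp [Matrix.mul_apply, Fintype.sum_prod_type, Fin.sum_univ_two, Rplus, Kq, mul_comm]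

/-- The asymmetric R-matrix intertwines the coproduct with the flipped coproduct:
`R⁺(u) Δ(x) = (τ∘Δ)(x) R⁺(u)` for `x ∈ {X⁺, X⁻, K}`, where `(τ∘Δ)(x)` is `Δ(x)`
conjugated by the flip `Π`. -/
theorem Rplus_intertwines_coproduct (η u : ℂ) (h : Complex.sinh (u + η) ≠ 0) :
    (Rplus η u * (Xp ⊗ₖ (1 : Matrix (Fin 2) (Fin 2) ℂ) + Kq (Complex.exp η) ⊗ₖ Xp)
      = flipMat * (Xp ⊗ₖ (1 : Matrix (Fin 2) (Fin 2) ℂ) + Kq (Complex.exp η) ⊗ₖ Xp) *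
          flipMat * Rplus η u) ∧
    (Rplus η u * (Xm ⊗ₖ Kq (Complex.exp η)⁻¹ + (1 : Matrix (Fin 2) (Fin 2) ℂ) ⊗ₖ Xm)
      = flipMat * (Xm ⊗ₖ Kq (Complex.exp η)⁻¹ + (1 : Matrix (Fin 2) (Fin 2) ℂ) ⊗ₖ Xm) *
          flipMat * Rplus η u) ∧
    (Rplus η u * (Kq (Complex.exp η) ⊗ₖ Kq (Complex.exp η))
      = flipMat * (Kq (Complex.exp η) ⊗ₖ Kq (Complex.exp η)) * flipMat * Rplus η u) := by
  have hq := exp_ne_zero η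
  have h₁ := exp_neg_mul_cC_add_exp_mul_bC h
  have h₂ := bC_add_exp_mul_exp_mul_cC h
  simp only [Matrix.mul_add flipMat, Matrix.add_mul _ _ flipMat, flipMat_mul_kronecker_mul_flipMat]
  exact ⟨Rplus_intertwines_Xp hq h₁ h₂, Rplus_intertwines_Xm hq h₁ h₂,
    Rplus_commute_Kq_kronecker η u _⟩
end

section
/- The symmetric XXZ R-matrix satisfies crossing symmetry: (σʸ⊗I) R₁₂(λ₁-η, λ₂) (σʸ⊗I) = b(λ₂-λ₁)^{-1} (Π R(λ₂-λ₁) Π)^{t₁}, where t₁ denotes partial transposition in the first tensor factor and Π is the flip. -/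
open Complex Matrix Kronecker Topology Filter

/-- Partial transposition in the first tensor factor of a matrix on `ℂ²⊗ℂ²`. -/
def ptranspose1 (M : Matrix (Fin 2 × Fin 2) (Fin 2 × Fin 2) ℂ) :
    Matrix (Fin 2 × Fin 2) (Fin 2 × Fin 2) ℂ :=
  fun p r => M (r.1, p.2) (p.1, r.2)

/-- The Pauli matrix `σʸ = [[0,-i],[i,0]]`. -/
def sigmaY : Matrix (Fin 2) (Fin 2) ℂ :=
  fun i j => if i = 0 ∧ j = 1 then -Complex.I else if i = 1 ∧ j = 0 then Complex.I else 0

/-! With `v = λ₂ - λ₁` the spectral parameter on the left is `u = -(v + η)`. Conjugation by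
`σʸ ⊗ 1` turns the six-vertex matrix with weights `(a, b, c)` into the partial transpose of the
one with weights `(b, a, -c)`, while the flip fixes it. Since `sinh` is odd,
`b(-(v + η)) = b(v)⁻¹` and `c(-(v + η)) = -b(v)⁻¹ c(v)`, which are exactly the weights of
`b(v)⁻¹ R(v)`. -/

def sixVertex (a b c : ℂ) : Matrix (Fin 2 × Fin 2) (Fin 2 × Fin 2) ℂ :=
  Matrix.of fun p q =>
    if p = q then (if p.1 = p.2 then a else b)
    else if p.1 = q.2 ∧ p.2 = q.1 ∧ p.1 ≠ p.2 then c else 0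

theorem Rsym_eq_sixVertex (η u : ℂ) : Rsym η u = sixVertex 1 (bC η u) (cC η u) := rfl

theorem smul_sixVertex (k a b c : ℂ) :
    k • sixVertex a b c = sixVertex (k * a) (k * b) (k * c) := by
  ext p q
  simp only [sixVertex, Matrix.smul_apply, of_apply, smul_eq_mul, mul_ite, mul_zero]

theorem ptranspose1_smul (k : ℂ) (M : Matrix (Fin 2 × Fin 2) (Fin 2 × Fin 2) ℂ) :
    ptranspose1 (k • M) = k • ptranspose1 M := rfl

theorem flipMat_mul_sixVertex_mul_flipMat (a b c : ℂ) :
    flipMat * sixVertex a b c * flipMat = sixVertex a b c := by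
  ext ⟨i, j⟩ ⟨k, l⟩
  fin_cases i <;> fin_cases j <;> fin_cases k <;> fin_cases l <;>
    simp [mul_apply, Fintype.sum_prod_type, Fin.sum_univ_two, flipMat, sixVertex]

theorem sigmaY_kron_one_conj_sixVertex (a b c : ℂ) :
    (sigmaY ⊗ₖ (1 : Matrix (Fin 2) (Fin 2) ℂ)) * sixVertex a b c *
        (sigmaY ⊗ₖ (1 : Matrix (Fin 2) (Fin 2) ℂ)) = ptranspose1 (sixVertex b a (-c)) := by
  ext ⟨i, j⟩ ⟨k, l⟩
  fin_cases i <;> fin_cases j <;> fin_cases k <;> fin_cases l <;>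
    simp [mul_apply, Fintype.sum_prod_type, Fin.sum_univ_two, sigmaY, sixVertex, ptranspose1,
      kroneckerMap_apply, one_apply, mul_comm _ I, ← mul_assoc, I_mul_I]

theorem bC_neg_add (η v : ℂ) : bC η (-(v + η)) = (bC η v)⁻¹ := by
  rw [bC, bC, show -(v + η) + η = -v by ring, Complex.sinh_neg, Complex.sinh_neg,
    neg_div_neg_eq, inv_div]

theorem cC_neg_add (η v : ℂ) (h : Complex.sinh (v + η) ≠ 0) :
    cC η (-(v + η)) = -((bC η v)⁻¹ * cC η v) := by
  rw [cC, cC, bC, show -(v + η) + η = -v by ring, Complex.sinh_neg, inv_div]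
  field_simp

/-- Crossing symmetry of the XXZ R-matrix:
`(σʸ⊗I) R₁₂(λ₁-η, λ₂) (σʸ⊗I) = b(λ₂-λ₁)⁻¹ (Π R(λ₂-λ₁) Π)^{t₁}`. -/
theorem crossing_symmetry (η lam1 lam2 : ℂ)
    (h0 : Complex.sinh (lam1 - lam2) ≠ 0)
    (h1 : Complex.sinh (lam2 - lam1 + η) ≠ 0) :
    (sigmaY ⊗ₖ (1 : Matrix (Fin 2) (Fin 2) ℂ)) * Rsym η (lam1 - η - lam2) *
        (sigmaY ⊗ₖ (1 : Matrix (Fin 2) (Fin 2) ℂ))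
      = (bC η (lam2 - lam1))⁻¹ •
          ptranspose1 (flipMat * Rsym η (lam2 - lam1) * flipMat) := by
  set v := lam2 - lam1
  have hu : lam1 - η - lam2 = -(v + η) := by ring
  have hv : Complex.sinh v ≠ 0 := by
    rwa [show v = -(lam1 - lam2) by ring, Complex.sinh_neg, neg_ne_zero]
  have hb : bC η v ≠ 0 := div_ne_zero hv h1
  rw [hu, Rsym_eq_sixVertex, Rsym_eq_sixVertex, sigmaY_kron_one_conj_sixVertex,
    flipMat_mul_sixVertex_mul_flipMat, ← ptranspose1_smul, smul_sixVertex, bC_neg_add,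
    cC_neg_add η v h1, neg_neg, mul_one, inv_mul_cancel₀ hb]
end

section
/- In the F-basis, the pseudo-diagonalized B operator of the spin-1/2 XXZ chain for n = 2 sites equals: F₁₂ B₁₂(λ) F₁₂^{-1} = c₀₁ σ₁⁻ ⊗ diag(b₀₂, b₂₁^{-1}) + c₀₂ diag(b₀₁, b₁₂^{-1}) ⊗ σ₂⁻, where b₀ᵢ = b(λ-ξᵢ), bᵢⱼ = b(ξᵢ-ξⱼ), c₀ᵢ = c(λ-ξᵢ). -/
open Complex Matrix Kronecker Topology Filter

/-- The lowering operator `σ⁻ = [[0,0],[1,0]]`. -/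
def sigmaMinus : Matrix (Fin 2) (Fin 2) ℂ := fun i j => if i = 1 ∧ j = 0 then 1 else 0

/-- The two-site F-matrix `F₁₂ = e₁^{11} + e₁^{22} R₁₂(ξ₁-ξ₂)` on `ℂ²⊗ℂ²`. -/
noncomputable def F12 (η xi1 xi2 : ℂ) : Matrix (Fin 2 × Fin 2) (Fin 2 × Fin 2) ℂ :=
  (Matrix.of fun p q : Fin 2 × Fin 2 => if p = q ∧ p.1 = 0 then (1 : ℂ) else 0)
    + (Matrix.of fun p q : Fin 2 × Fin 2 => if p = q ∧ p.1 = 1 then (1 : ℂ) else 0) *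
        Rsym η (xi1 - xi2)

/-- The `B`-operator (upper-right block w.r.t. factor 0) of the two-site monodromy
matrix `T₀(λ) = R₀₂(λ-ξ₂)R₀₁(λ-ξ₁)`, as a matrix on the quantum space `ℂ²⊗ℂ²`. -/
noncomputable def B12 (η lam xi1 xi2 : ℂ) :
    Matrix (Fin 2 × Fin 2) (Fin 2 × Fin 2) ℂ :=
  fun p q => monodromy η lam ![xi1, xi2] ![0, p.1, p.2] ![1, q.1, q.2]

/-!
Expanding the two-site monodromy matrix gives
`B₁₂ = c₀₁ σ₁⁻ ⊗ diag(1, b₀₂) + c₀₂ diag(b₀₁, 1) ⊗ σ₂⁻`, and `F₁₂` is a transvection times a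
diagonal matrix, so it is invertible with determinant `b₁₂`. The claim is therefore the
intertwining relation `F₁₂ B₁₂ = X F₁₂`, where `X` is the right-hand side. Entrywise, it reduces
to two three-term relations between the weights `b` and `c`. Both are instances of Ptolemy's
identity for `sinh`.
-/

theorem Complex.sinh_sub_mul_sinh_sub_add_sinh_sub_mul_sinh_sub (a b c d : ℂ) :
    sinh (a - b) * sinh (c - d) + sinh (a - d) * sinh (b - c) = sinh (a - c) * sinh (b - d) := by
  simp only [sinh_sub]
  ring

section Weights

variable {η x y z : ℂ}

theorem bC_ne_zero (hx : sinh x ≠ 0) (hxη : sinh (x + η) ≠ 0) : bC η x ≠ 0 :=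
  div_ne_zero hx hxη

theorem bC_mul_cC_add_cC_mul_cC_mul_bC (hxy : sinh (x - y + η) ≠ 0)
    (hyz : sinh (y - z + η) ≠ 0) (hxz : sinh (x - z + η) ≠ 0) :
    bC η (y - z) * cC η (x - y) + cC η (y - z) * cC η (x - z) * bC η (x - y)
      = cC η (x - y) * bC η (x - z) := by
  have ptolemy := sinh_sub_mul_sinh_sub_add_sinh_sub_mul_sinh_sub x y z (z - η)
  simp only [bC, cC]
  field_simp
  ring_nf at ptolemy ⊢
  linear_combination (sinh η) * ptolemy

theorem cC_mul_bC_eq_add (hxy : sinh (x - y + η) ≠ 0) (hyz : sinh (y - z + η) ≠ 0)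
    (hxz : sinh (x - z + η) ≠ 0) (hyz' : sinh (y - z) ≠ 0) :
    cC η (x - y) * bC η (x - z)
      = cC η (x - y) * (bC η (z - y))⁻¹ + cC η (y - z) * cC η (x - z) * (bC η (y - z))⁻¹ := by
  have ptolemy := sinh_sub_mul_sinh_sub_add_sinh_sub_mul_sinh_sub x (y - η) z (z - η)
  simp only [bC, cC, inv_div, show z - y = -(y - z) by ring,
    show -(y - z) + η = -(y - z - η) by ring, sinh_neg]
  field_simp
  ring_nf at ptolemy ⊢
  linear_combination (-sinh η) * ptolemy

end Weights

theorem F12_eq_transvection_mul_diagonal (η xi1 xi2 : ℂ) :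
    F12 η xi1 xi2 = transvection (1, 0) (0, 1) (cC η (xi1 - xi2)) *
      diagonal (fun p => if p = (1, 0) then bC η (xi1 - xi2) else 1) := by
  ext ⟨p1, p2⟩ ⟨q1, q2⟩
  fin_cases p1 <;> fin_cases p2 <;> fin_cases q1 <;> fin_cases q2 <;>
    simp [F12, Rsym, transvection, mul_apply, Fintype.sum_prod_type, one_apply, single]

theorem det_F12 (η xi1 xi2 : ℂ) : (F12 η xi1 xi2).det = bC η (xi1 - xi2) := by
  simp [F12_eq_transvection_mul_diagonal, det_transvection_of_ne]

theorem monodromy_two_sites (η lam x1 x2 : ℂ) :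
    monodromy η lam ![x1, x2] =
      embed 0 2 (Rsym η (lam - x2)) * embed 0 1 (Rsym η (lam - x1)) := by
  simp [monodromy, List.finRange_succ]

theorem B12_eq_kronecker (η lam xi1 xi2 : ℂ) :
    B12 η lam xi1 xi2 =
      cC η (lam - xi1) • (sigmaMinus ⊗ₖ diagonal ![1, bC η (lam - xi2)])
        + cC η (lam - xi2) • (diagonal ![bC η (lam - xi1), 1] ⊗ₖ sigmaMinus) := by
  let e : Fin 2 × Fin 2 × Fin 2 ≃ (Fin 3 → Fin 2) :=
    ((Equiv.refl _).prodCongr (finTwoArrowEquiv _).symm).trans (Fin.consEquiv fun _ => Fin 2)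
  ext ⟨p1, p2⟩ ⟨q1, q2⟩
  rw [B12, monodromy_two_sites, mul_apply, ← e.sum_comp]
  simp only [e, Fintype.sum_prod_type, Fin.sum_univ_two, Equiv.trans_apply,
    Equiv.prodCongr_apply]
  fin_cases p1 <;> fin_cases p2 <;> fin_cases q1 <;> fin_cases q2 <;>
    simp [embed, Rsym, sigmaMinus, Fin.prod_univ_succ, Finset.prod_filter, mul_comm]

theorem F12_mul_B12 (η lam xi1 xi2 : ℂ)
    (h1 : sinh (lam - xi1 + η) ≠ 0) (h2 : sinh (lam - xi2 + η) ≠ 0)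
    (h12 : sinh (xi1 - xi2 + η) ≠ 0) (h0 : sinh (xi1 - xi2) ≠ 0) :
    F12 η xi1 xi2 * B12 η lam xi1 xi2 =
      (cC η (lam - xi1) • (sigmaMinus ⊗ₖ diagonal ![bC η (lam - xi2), (bC η (xi2 - xi1))⁻¹])
        + cC η (lam - xi2) • (diagonal ![bC η (lam - xi1), (bC η (xi1 - xi2))⁻¹] ⊗ₖ sigmaMinus))
        * F12 η xi1 xi2 := by
  rw [B12_eq_kronecker, F12_eq_transvection_mul_diagonal]
  ext ⟨p1, p2⟩ ⟨q1, q2⟩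
  fin_cases p1 <;> fin_cases p2 <;> fin_cases q1 <;> fin_cases q2 <;>
    simp [mul_apply, Fintype.sum_prod_type, transvection, sigmaMinus, one_apply, single]
  · linear_combination bC_mul_cC_add_cC_mul_cC_mul_bC h1 h12 h2
  · linear_combination cC_mul_bC_eq_add h1 h12 h2 h0
  · rw [inv_mul_cancel_right₀ (bC_ne_zero h0 h12)]

theorem B_pseudo_diagonal_two_sites_general (η lam xi1 xi2 : ℂ)
    (h1 : Complex.sinh (lam - xi1 + η) ≠ 0)
    (h2 : Complex.sinh (lam - xi2 + η) ≠ 0)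
    (h12 : Complex.sinh (xi1 - xi2 + η) ≠ 0)
    (h0 : Complex.sinh (xi1 - xi2) ≠ 0) :
    F12 η xi1 xi2 * B12 η lam xi1 xi2 * (F12 η xi1 xi2)⁻¹
      = cC η (lam - xi1) •
          (sigmaMinus ⊗ₖ Matrix.diagonal ![bC η (lam - xi2), (bC η (xi2 - xi1))⁻¹])
        + cC η (lam - xi2) •
          (Matrix.diagonal ![bC η (lam - xi1), (bC η (xi1 - xi2))⁻¹] ⊗ₖ sigmaMinus) := by
  have hF : IsUnit (F12 η xi1 xi2).det := by
    rw [det_F12]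
    exact (bC_ne_zero h0 h12).isUnit
  rw [F12_mul_B12 η lam xi1 xi2 h1 h2 h12 h0, mul_nonsing_inv_cancel_right _ _ hF]

/-- Pseudo-diagonalization of the `B` operator for `n = 2` sites:
`F₁₂ B₁₂(λ) F₁₂⁻¹ = c₀₁ σ₁⁻ ⊗ diag(b₀₂, b₂₁⁻¹) + c₀₂ diag(b₀₁, b₁₂⁻¹) ⊗ σ₂⁻`. -/
theorem B_pseudo_diagonal_two_sites (η lam xi1 xi2 : ℂ)
    (h1 : Complex.sinh (lam - xi1 + η) ≠ 0)
    (h2 : Complex.sinh (lam - xi2 + η) ≠ 0)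
    (h12 : Complex.sinh (xi1 - xi2 + η) ≠ 0)
    (h21 : Complex.sinh (xi2 - xi1 + η) ≠ 0)
    (h0 : Complex.sinh (xi1 - xi2) ≠ 0) :
    F12 η xi1 xi2 * B12 η lam xi1 xi2 * (F12 η xi1 xi2)⁻¹
      = cC η (lam - xi1) •
          (sigmaMinus ⊗ₖ Matrix.diagonal ![bC η (lam - xi2), (bC η (xi2 - xi1))⁻¹])
        + cC η (lam - xi2) •
          (Matrix.diagonal ![bC η (lam - xi1), (bC η (xi1 - xi2))⁻¹] ⊗ₖ sigmaMinus) :=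
  B_pseudo_diagonal_two_sites_general η lam xi1 xi2 h1 h2 h12 h0
end
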